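/- Let κ ∈ ℝ, n ≥ 2. Define γ_{n,n} = 1 and for 2 ≤ m ≤ n−1, γ_{n,m−1} = m(m−1)/(n(−κ−n+1) − (m−1)(−κ−m+2)) · γ_{n,m}; set ξ_n(x) = Σ_{m=2}^n γ_{n,m} x^m. Let b_{n,0} ∈ ℝ and b_{n,k} = −κ b_{n,k−1} + (n(−κ−n+1))^{k−1} · 2 γ_{n,2} for k ≥ 1. Let A_0 = −κx d/dx + x(1−x) d²/dx². Then for all k ≥ 1 and a ∈ ℝ: A_0^k [ξ_n + b_{n,0} x + a] = (n(−κ−n+1))^k ξ_n + b_{n,k} x. -/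

import Mathlib

/-!
With `λₘ = m(−κ−m+1)` one has `A₀ xᵐ = λₘ xᵐ + m(m−1) xᵐ⁻¹`, so `A₀` is triangular on monomials.
The γ-recursion says exactly that the lower-order term `m(m−1)γₘ xᵐ⁻¹` produced by `γₘ xᵐ` makes
up the defect `(λₙ − λₘ₋₁)γₘ₋₁ xᵐ⁻¹` of the next term (note `(m−1)(−κ−m+2) = λₘ₋₁`). Summing over
`m`, these corrections telescope and leave `A₀ ξₙ = λₙ ξₙ + 2γ₂ x`. As `A₀ x = −κ x` and
`A₀ 1 = 0`, the operator `A₀` then preserves the span of `ξₙ` and `x`, and iterating it gives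
the recursion for `bₖ`.
-/

open Polynomial

/-- The degenerate Wright–Fisher generator A₀ = −κx d/dx + x(1−x) d²/dx². -/
noncomputable def wfGen (κ : ℝ) : Polynomial ℝ →ₗ[ℝ] Polynomial ℝ :=
  (LinearMap.mulLeft ℝ (Polynomial.C (-κ) * Polynomial.X)).comp Polynomial.derivative
    + (LinearMap.mulLeft ℝ (Polynomial.X * (1 - Polynomial.X))).comp
        (Polynomial.derivative.comp Polynomial.derivative)

open Finset

theorem wfGen_X_pow (κ : ℝ) (m : ℕ) :
    wfGen κ (X ^ m) =
      C ((m : ℝ) * (-κ - m + 1)) * X ^ m + C ((m : ℝ) * (m - 1)) * X ^ (m - 1) := by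
  rcases m with _ | _ | m
  · simp [wfGen]
  · simp [wfGen]
  · simp [wfGen]
    ring

theorem wfGen_C (κ a : ℝ) : wfGen κ (C a) = 0 := by
  simp [wfGen]

theorem wfGen_X (κ : ℝ) : wfGen κ X = C (-κ) * X := by
  simp [wfGen]

theorem wfGen_C_mul (κ a : ℝ) (p : ℝ[X]) : wfGen κ (C a * p) = C a * wfGen κ p := by
  simp only [← smul_eq_C_mul, map_smul]

theorem wfGen_sum_eq_of_recursion (κ : ℝ) {n : ℕ} (hn : 2 ≤ n) (γ : ℕ → ℝ)
    (hrec : ∀ m, 2 ≤ m → m < n →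
      (m : ℝ) * (-κ - m + 1) * γ m + (m + 1) * m * γ (m + 1) = n * (-κ - n + 1) * γ m) :
    wfGen κ (∑ m ∈ Icc 2 n, C (γ m) * X ^ m)
      = C ((n : ℝ) * (-κ - n + 1)) * ∑ m ∈ Icc 2 n, C (γ m) * X ^ m + C (2 * γ 2) * X := by
  set spill : ℕ → ℝ[X] := fun m ↦ C ((m : ℝ) * (m - 1) * γ m) * X ^ (m - 1)
  have hterm : ∀ m, wfGen κ (C (γ m) * X ^ m) = C (m * (-κ - m + 1) * γ m) * X ^ m + spill m := by
    intro m
    rw [wfGen_C_mul, wfGen_X_pow]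
    simp only [spill, map_mul]
    ring
  -- below the top degree, the spill of the next term turns `λₘ` into `λₙ`; the spills telescope
  have hmid : ∀ m ∈ Ico 2 n, wfGen κ (C (γ m) * X ^ m)
      = C ((n : ℝ) * (-κ - n + 1)) * (C (γ m) * X ^ m) - (spill (m + 1) - spill m) := by
    intro m hm
    obtain ⟨h2m, hmn⟩ := mem_Ico.mp hm
    rw [hterm, ← mul_assoc, ← C_mul, ← hrec m h2m hmn]
    simp only [spill, map_add, map_mul, Nat.cast_add, Nat.cast_one, Nat.add_sub_cancel,
      add_sub_cancel_right]
    ring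
  rw [map_sum, ← Ico_add_one_right_eq_Icc, sum_Ico_succ_top hn, sum_Ico_succ_top hn,
    sum_congr rfl hmid, sum_sub_distrib, sum_Ico_sub _ hn, hterm, ← mul_sum]
  have hspill_two : spill 2 = C (2 * γ 2) * X := by
    simp only [spill]
    congr 1 <;> norm_num
  generalize ∑ m ∈ Ico 2 n, C (γ m) * X ^ m = ξ
  rw [hspill_two]
  simp only [map_mul]
  ring

theorem gamma_balance_of_ratio (κ : ℝ) {n : ℕ} (γ : ℕ → ℝ)
    (hden : ∀ m : ℕ, 2 ≤ m → m ≤ n →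
      ((n : ℝ) * (-κ - n + 1) - ((m : ℝ) - 1) * (-κ - m + 2)) ≠ 0)
    (hγ : ∀ m : ℕ, 2 ≤ m → m ≤ n →
      γ (m - 1) = ((m : ℝ) * ((m : ℝ) - 1))
          / ((n : ℝ) * (-κ - n + 1) - ((m : ℝ) - 1) * (-κ - m + 2)) * γ m)
    {m : ℕ} (h2m : 2 ≤ m) (hmn : m < n) :
    (m : ℝ) * (-κ - m + 1) * γ m + (m + 1) * m * γ (m + 1) = n * (-κ - n + 1) * γ m := by
  have hd := hden (m + 1) (by omega) hmn
  have hg := hγ (m + 1) (by omega) hmn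
  rw [Nat.add_sub_cancel] at hg
  push_cast at hd hg
  rw [hg]
  field_simp
  ring

theorem wfGen_pow_apply_of_eq_C_mul_add {κ lam c : ℝ} {p : ℝ[X]}
    (hp : wfGen κ p = C lam * p + C c * X) (b : ℕ → ℝ)
    (hb : ∀ k, 1 ≤ k → b k = -κ * b (k - 1) + lam ^ (k - 1) * c) (a : ℝ) {k : ℕ} (hk : 1 ≤ k) :
    (wfGen κ ^ k) (p + C (b 0) * X + C a) = C (lam ^ k) * p + C (b k) * X := by
  have hstep : ∀ s t, wfGen κ (C s * p + C t * X) = C (lam * s) * p + C (-κ * t + s * c) * X := by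
    intro s t
    rw [map_add, wfGen_C_mul, wfGen_C_mul, hp, wfGen_X]
    simp only [map_add, map_mul]
    ring
  induction k, hk using Nat.le_induction with
  | base =>
    rw [pow_one, map_add, wfGen_C, add_zero, hb 1 le_rfl, ← one_mul p, ← C_1, hstep]
    simp
  | succ k hk ih =>
    rw [pow_succ', Module.End.mul_apply, ih, hstep, hb (k + 1) (by omega), Nat.add_sub_cancel,
      pow_succ']

theorem stmt18_general (κ : ℝ) (n : ℕ) (hn : 2 ≤ n) (γ : ℕ → ℝ)
    (hden : ∀ m : ℕ, 2 ≤ m → m ≤ n →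
      ((n : ℝ) * (-κ - n + 1) - ((m : ℝ) - 1) * (-κ - m + 2)) ≠ 0)
    (hγ : ∀ m : ℕ, 2 ≤ m → m ≤ n →
      γ (m - 1) = ((m : ℝ) * ((m : ℝ) - 1))
          / ((n : ℝ) * (-κ - n + 1) - ((m : ℝ) - 1) * (-κ - m + 2)) * γ m)
    (b : ℕ → ℝ)
    (hb : ∀ k : ℕ, 1 ≤ k →
      b k = -κ * b (k - 1) + ((n : ℝ) * (-κ - n + 1)) ^ (k - 1) * (2 * γ 2))
    (a : ℝ) (k : ℕ) (hk : 1 ≤ k) :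
    ((wfGen κ) ^ k)
        ((∑ m ∈ Finset.Icc 2 n, Polynomial.C (γ m) * X ^ m) + Polynomial.C (b 0) * X
          + Polynomial.C a)
      = Polynomial.C (((n : ℝ) * (-κ - n + 1)) ^ k)
          * (∑ m ∈ Finset.Icc 2 n, Polynomial.C (γ m) * X ^ m)
        + Polynomial.C (b k) * X :=
  wfGen_pow_apply_of_eq_C_mul_add
    (wfGen_sum_eq_of_recursion κ hn γ fun _ h2m hmn ↦ gamma_balance_of_ratio κ γ hden hγ h2m hmn)
    b hb a hk

/-- Theorem 3, equation (A^k_psi_n): A₀ᵏ[ξₙ + b₀x + a] = λₙᵏ ξₙ + bₖ x, where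
λₙ = n(−κ−n+1), ξₙ = Σ_{m=2}^n γₘ xᵐ with γₙ = 1 and the γ-recursion, and
bₖ = −κ b_{k−1} + λₙ^{k−1}·2γ₂. -/
theorem stmt18 (κ : ℝ) (n : ℕ) (hn : 2 ≤ n) (γ : ℕ → ℝ) (hγn : γ n = 1)
    (hden : ∀ m : ℕ, 2 ≤ m → m ≤ n →
      ((n : ℝ) * (-κ - n + 1) - ((m : ℝ) - 1) * (-κ - m + 2)) ≠ 0)
    (hγ : ∀ m : ℕ, 2 ≤ m → m ≤ n →
      γ (m - 1) = ((m : ℝ) * ((m : ℝ) - 1))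
          / ((n : ℝ) * (-κ - n + 1) - ((m : ℝ) - 1) * (-κ - m + 2)) * γ m)
    (b : ℕ → ℝ)
    (hb : ∀ k : ℕ, 1 ≤ k →
      b k = -κ * b (k - 1) + ((n : ℝ) * (-κ - n + 1)) ^ (k - 1) * (2 * γ 2))
    (a : ℝ) (k : ℕ) (hk : 1 ≤ k) :
    ((wfGen κ) ^ k)
        ((∑ m ∈ Finset.Icc 2 n, Polynomial.C (γ m) * X ^ m) + Polynomial.C (b 0) * X
          + Polynomial.C a)
      = Polynomial.C (((n : ℝ) * (-κ - n + 1)) ^ k)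
          * (∑ m ∈ Finset.Icc 2 n, Polynomial.C (γ m) * X ^ m)
        + Polynomial.C (b k) * X :=
  stmt18_general κ n hn γ hden hγ b hb a k hk
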